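/- Let α ∈ (0,1], let X = (X_1, …, X_n) be an instance of independent nonnegative random variables with atomless distributions and integrable maximum M, and let τ̄ be a 3/4-threshold for X (i.e. E[M·1{M ≥ τ̄}] = (3/4)·E[M]). Let B denote the event {M > τ̄/α³} and g(x) = 3x²/(1 + 3x²). Then E[pick((X_1, …, X_n), max(τ̄, α·M))·1_B] ≥ ((1 − g(α)) + α·g(α))·E[M·1_B]. -/

import Mathlib

open MeasureTheory ProbabilityTheory

/-- `pick v t` returns `v i` for the least index `i` with `v i ≥ t`, and `0` if no
such index exists. -/
noncomputable def pick {n : ℕ} (v : Fin n → ℝ) (t : ℝ) : ℝ :=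
  if h : (Finset.univ.filter (fun i => t ≤ v i)).Nonempty then
    v ((Finset.univ.filter (fun i => t ≤ v i)).min' h)
  else 0

/-- The realized maximum `M(X)(ω) = max_i X_i(ω)` of an instance. -/
noncomputable def instMax {Ω : Type*} {n : ℕ} (X : Fin n → Ω → ℝ) (ω : Ω) : ℝ :=
  ⨆ i, X i ω

/-- `OPT(X) = E[max_i X_i]`. -/
noncomputable def OPT {Ω : Type*} {m : MeasurableSpace Ω} (μ : Measure Ω) {n : ℕ}
    (X : Fin n → Ω → ℝ) : ℝ :=
  ∫ ω, instMax X ω ∂μ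

/-- `TAL(X, τ) = E[pick((X_1,…,X_n), τ)]`: the expected value of the threshold
algorithm with threshold `τ`. -/
noncomputable def TAL {Ω : Type*} {m : MeasurableSpace Ω} (μ : Measure Ω) {n : ℕ}
    (X : Fin n → Ω → ℝ) (τ : ℝ) : ℝ :=
  ∫ ω, pick (fun i => X i ω) τ ∂μ

/-- `TAL_α(X, τ) = E[pick((X_1,…,X_n), max(τ, α·M))]`: the expected value of the
prediction-augmented threshold algorithm with base threshold `τ` and prediction
quality `α`. -/
noncomputable def TALpred {Ω : Type*} {m : MeasurableSpace Ω} (μ : Measure Ω) (α : ℝ)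
    {n : ℕ} (X : Fin n → Ω → ℝ) (τ : ℝ) : ℝ :=
  ∫ ω, pick (fun i => X i ω) (max τ (α * instMax X ω)) ∂μ

/-- The SC-threshold `η(I) = sup{τ ≥ 0 : TAL(I, τ) ≥ τ}`. -/
noncomputable def SCthreshold {Ω : Type*} {m : MeasurableSpace Ω} (μ : Measure Ω)
    {n : ℕ} (X : Fin n → Ω → ℝ) : ℝ :=
  sSup {τ : ℝ | 0 ≤ τ ∧ τ ≤ TAL μ X τ}

lemma pick_eq_sum {n : ℕ} (v : Fin n → ℝ) (t : ℝ) :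
    pick v t = ∑ i, if t ≤ v i ∧ ∀ j, j < i → ¬ t ≤ v j then v i else 0 := by
  classical
  unfold pick
  split_ifs with hne
  · set F := Finset.univ.filter (fun i => t ≤ v i) with hF
    rw [Finset.sum_eq_single (F.min' hne)]
    · rw [if_pos]
      refine ⟨(Finset.mem_filter.mp (F.min'_mem hne)).2, fun j hj hc => ?_⟩
      exact absurd (F.min'_le j (Finset.mem_filter.mpr ⟨Finset.mem_univ j, hc⟩)) (not_le.mpr hj)
    · intro i _ hne'
      rw [if_neg]
      rintro ⟨h1, h2⟩
      have hiF : i ∈ F := Finset.mem_filter.mpr ⟨Finset.mem_univ i, h1⟩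
      have hlt : F.min' hne < i := lt_of_le_of_ne (F.min'_le i hiF) (Ne.symm hne')
      exact h2 _ hlt (Finset.mem_filter.mp (F.min'_mem hne)).2
    · intro h; exact absurd (Finset.mem_univ _) h
  · symm
    apply Finset.sum_eq_zero
    intro i _
    rw [if_neg]
    rintro ⟨h1, _⟩
    exact hne ⟨i, Finset.mem_filter.mpr ⟨Finset.mem_univ i, h1⟩⟩

lemma pick_of_nonempty {n : ℕ} (v : Fin n → ℝ) (t : ℝ)
    (h : (Finset.univ.filter (fun i => t ≤ v i)).Nonempty) :
    pick v t = v ((Finset.univ.filter (fun i => t ≤ v i)).min' h) := dif_pos h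

lemma measurable_ciSup_fin {ι : Type*} [Fintype ι] {δ : Type*} [MeasurableSpace δ]
    {f : ι → δ → ℝ} (hf : ∀ i, Measurable (f i)) :
    Measurable (fun ω => ⨆ i, f i ω) := by
  cases isEmpty_or_nonempty ι
  · simp only [Real.iSup_of_isEmpty]
    exact measurable_const
  · have h : (fun ω => ⨆ i, f i ω) = Finset.univ.sup' Finset.univ_nonempty f := by
      funext ω
      rw [← Finset.sup'_univ_eq_ciSup, Finset.sup'_apply]
    rw [h]
    exact Finset.measurable_sup' _ (fun i _ => hf i)

lemma keyPair {Ω : Type*} [MeasurableSpace Ω] (μ : Measure Ω) [IsProbabilityMeasure μ]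
    (M Xi Y : Ω → ℝ) (hM : Measurable M) (hXi : Measurable Xi) (hY : Measurable Y)
    (hint : Integrable M μ) (hMnn : ∀ ω, 0 ≤ M ω) (hXinn : ∀ ω, 0 ≤ Xi ω)
    (hXiM : ∀ ω, Xi ω ≤ M ω) (hYM : ∀ ω, Y ω ≤ M ω)
    (hindep : IndepFun Xi Y μ)
    (τ α : ℝ) (hτ : 0 ≤ τ) (hα0 : 0 < α) (hα1 : α ≤ 1)
    (hthr' : ∫ ω in {ω | τ ≤ M ω}, M ω ∂μ = 3/4 * ∫ ω, M ω ∂μ) :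
    ∫ ω, (if τ/α^3 < Xi ω ∧ α * Xi ω ≤ Y ω ∧ Y ω ≤ Xi ω then Xi ω else 0) ∂μ
      ≤ 3*α^2 * ∫ ω, (if τ/α^3 < Xi ω ∧ Y ω < α * Xi ω then Xi ω else 0) ∂μ := by
  classical
  set θ := τ/α^3 with hθdef
  have hθnn : 0 ≤ θ := div_nonneg hτ (by positivity)
  set Φ : ℝ × ℝ → ℝ := fun p => if θ < p.1 ∧ α * p.1 ≤ p.2 ∧ p.2 ≤ p.1 then p.1 else 0 with hΦdef
  set Ψ : ℝ × ℝ → ℝ := fun p => if θ < p.1 ∧ p.2 < α * p.1 then p.1 else 0 with hΨdef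
  have hSΦ : MeasurableSet {p : ℝ × ℝ | θ < p.1 ∧ α * p.1 ≤ p.2 ∧ p.2 ≤ p.1} :=
    (measurableSet_lt measurable_const measurable_fst).inter
      ((measurableSet_le (measurable_fst.const_mul α) measurable_snd).inter
        (measurableSet_le measurable_snd measurable_fst))
  have hSΨ : MeasurableSet {p : ℝ × ℝ | θ < p.1 ∧ p.2 < α * p.1} :=
    (measurableSet_lt measurable_const measurable_fst).inter
      (measurableSet_lt measurable_snd (measurable_fst.const_mul α))
  have hΦm : Measurable Φ := Measurable.ite hSΦ measurable_fst measurable_const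
  have hΨm : Measurable Ψ := Measurable.ite hSΨ measurable_fst measurable_const
  have hpairm : Measurable (fun ω => (Xi ω, Y ω)) := hXi.prodMk hY
  have hcompΦ : Integrable (fun ω => Φ (Xi ω, Y ω)) μ := by
    refine hint.mono ((hΦm.comp hpairm).aestronglyMeasurable) (ae_of_all μ fun ω => ?_)
    simp only [Real.norm_eq_abs, Function.comp]
    rw [abs_of_nonneg (hMnn ω)]
    have h0 : 0 ≤ Φ (Xi ω, Y ω) := by
      simp only [hΦdef]; split_ifs with h
      · exact hXinn ω
      · exact le_rfl
    rw [abs_of_nonneg h0]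
    simp only [hΦdef]; split_ifs with h
    · exact hXiM ω
    · exact hMnn ω
  have hcompΨ : Integrable (fun ω => Ψ (Xi ω, Y ω)) μ := by
    refine hint.mono ((hΨm.comp hpairm).aestronglyMeasurable) (ae_of_all μ fun ω => ?_)
    simp only [Real.norm_eq_abs, Function.comp]
    rw [abs_of_nonneg (hMnn ω)]
    have h0 : 0 ≤ Ψ (Xi ω, Y ω) := by
      simp only [hΨdef]; split_ifs with h
      · exact hXinn ω
      · exact le_rfl
    rw [abs_of_nonneg h0]
    simp only [hΨdef]; split_ifs with h
    · exact hXiM ω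
    · exact hMnn ω
  haveI hmapXi : IsProbabilityMeasure (μ.map Xi) := Measure.isProbabilityMeasure_map hXi.aemeasurable
  haveI hmapY : IsProbabilityMeasure (μ.map Y) := Measure.isProbabilityMeasure_map hY.aemeasurable
  have hprodeq : μ.map (fun ω => (Xi ω, Y ω)) = (μ.map Xi).prod (μ.map Y) :=
    (indepFun_iff_map_prod_eq_prod_map_map hXi.aemeasurable hY.aemeasurable).mp hindep
  have hΦprod : Integrable Φ ((μ.map Xi).prod (μ.map Y)) := by
    rw [← hprodeq]
    exact (integrable_map_measure hΦm.aestronglyMeasurable hpairm.aemeasurable).mpr hcompΦ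
  have hΨprod : Integrable Ψ ((μ.map Xi).prod (μ.map Y)) := by
    rw [← hprodeq]
    exact (integrable_map_measure hΨm.aestronglyMeasurable hpairm.aemeasurable).mpr hcompΨ
  have hiΦ : ∫ ω, Φ (Xi ω, Y ω) ∂μ = ∫ x, ∫ y, Φ (x, y) ∂(μ.map Y) ∂(μ.map Xi) := by
    rw [← integral_map hpairm.aemeasurable hΦm.aestronglyMeasurable, hprodeq,
      integral_prod _ hΦprod]
  have hiΨ : ∫ ω, Ψ (Xi ω, Y ω) ∂μ = ∫ x, ∫ y, Ψ (x, y) ∂(μ.map Y) ∂(μ.map Xi) := by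
    rw [← integral_map hpairm.aemeasurable hΨm.aestronglyMeasurable, hprodeq,
      integral_prod _ hΨprod]
  have hΨnn : ∀ p : ℝ × ℝ, 0 ≤ Ψ p := by
    intro p; simp only [hΨdef]; split_ifs with h
    · exact le_trans hθnn (le_of_lt h.1)
    · exact le_rfl
  -- the pointwise-in-x inequality
  have key : ∀ x : ℝ, (∫ y, Φ (x, y) ∂(μ.map Y)) ≤ 3*α^2 * ∫ y, Ψ (x, y) ∂(μ.map Y) := by
    intro x
    by_cases hx : θ < x
    · have hxpos : 0 < x := lt_of_le_of_lt hθnn hx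
      have hαx : 0 < α * x := mul_pos hα0 hxpos
      have hS1 : MeasurableSet {y : ℝ | α*x ≤ y ∧ y ≤ x} :=
        (measurableSet_le measurable_const measurable_id).inter
          (measurableSet_le measurable_id measurable_const)
      have hS2 : MeasurableSet {y : ℝ | y < α*x} := measurableSet_lt measurable_id measurable_const
      have e1 : (fun y => Φ (x, y)) = Set.indicator {y : ℝ | α*x ≤ y ∧ y ≤ x} (fun _ => x) := by
        funext y
        simp only [hΦdef, Set.indicator, Set.mem_setOf_eq]
        by_cases h : α*x ≤ y ∧ y ≤ x
        · rw [if_pos ⟨hx, h.1, h.2⟩, if_pos h]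
        · rw [if_neg (fun hh => h ⟨hh.2.1, hh.2.2⟩), if_neg h]
      have e2 : (fun y => Ψ (x, y)) = Set.indicator {y : ℝ | y < α*x} (fun _ => x) := by
        funext y
        simp only [hΨdef, Set.indicator, Set.mem_setOf_eq]
        by_cases h : y < α*x
        · rw [if_pos ⟨hx, h⟩, if_pos h]
        · rw [if_neg (fun hh => h hh.2), if_neg h]
      rw [e1, e2, integral_indicator hS1, integral_indicator hS2, setIntegral_const,
        setIntegral_const, smul_eq_mul, smul_eq_mul]
      have hmap1 : (μ.map Y) {y : ℝ | α*x ≤ y ∧ y ≤ x} = μ {ω | α*x ≤ Y ω ∧ Y ω ≤ x} := by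
        rw [Measure.map_apply hY hS1]; rfl
      have hmap2 : (μ.map Y) {y : ℝ | y < α*x} = μ {ω | Y ω < α*x} := by
        rw [Measure.map_apply hY hS2]; rfl
      rw [measureReal_def, measureReal_def, hmap1, hmap2]
      -- measure-level key inequality
      have hcube : α^3 ≤ α := by nlinarith [sq_nonneg α, sq_nonneg (1-α)]
      have hτα3 : τ < x * α^3 := (div_lt_iff₀ (by positivity)).mp hx
      have hταx : τ ≤ α * x := by nlinarith [mul_le_mul_of_nonneg_left hcube hxpos.le]
      set a := (μ {ω | α*x ≤ Y ω ∧ Y ω ≤ x}).toReal with hadef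
      set b := (μ {ω | Y ω < α*x}).toReal with hbdef
      have ha0 : 0 ≤ a := ENNReal.toReal_nonneg
      have hb0 : 0 ≤ b := ENNReal.toReal_nonneg
      have hSM : MeasurableSet {ω | α*x ≤ M ω} := measurableSet_le measurable_const hM
      have hA1 : a ≤ (μ {ω | α*x ≤ M ω}).toReal :=
        ENNReal.toReal_mono (measure_ne_top μ _)
          (measure_mono (fun ω h => le_trans h.1 (hYM ω)))
      have hA2 : (α*x) * (μ {ω | α*x ≤ M ω}).toReal ≤ ∫ ω in {ω | α*x ≤ M ω}, M ω ∂μ := by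
        have hconst : ∫ _ω in {ω | α*x ≤ M ω}, (α*x) ∂μ
            = (μ {ω | α*x ≤ M ω}).toReal * (α*x) := by
          rw [setIntegral_const, smul_eq_mul, measureReal_def]
        rw [mul_comm, ← hconst]
        refine setIntegral_mono_on (integrableOn_const (measure_ne_top μ _))
          hint.integrableOn hSM (fun ω hω => hω)
      have hA3 : ∫ ω in {ω | α*x ≤ M ω}, M ω ∂μ ≤ ∫ ω in {ω | τ ≤ M ω}, M ω ∂μ :=
        setIntegral_mono_set hint.integrableOn (ae_of_all _ fun ω => hMnn ω)
          (HasSubset.Subset.eventuallyLE (fun ω h => le_trans hταx h))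
      have hcompl : {ω | τ ≤ M ω}ᶜ = {ω | M ω < τ} := by ext ω; simp [not_le]
      have hsplit := integral_add_compl (s := {ω | τ ≤ M ω}) (measurableSet_le measurable_const hM) hint
      rw [hcompl] at hsplit
      have hlowval : ∫ ω in {ω | M ω < τ}, M ω ∂μ = 1/4 * ∫ ω, M ω ∂μ := by
        have := hsplit
        rw [hthr'] at this
        linarith
      have hlow : ∫ ω in {ω | M ω < τ}, M ω ∂μ ≤ τ * (μ {ω | M ω < τ}).toReal := by
        have hconst : ∫ _ω in {ω | M ω < τ}, τ ∂μ = (μ {ω | M ω < τ}).toReal * τ := by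
          rw [setIntegral_const, smul_eq_mul, measureReal_def]
        calc ∫ ω in {ω | M ω < τ}, M ω ∂μ
            ≤ ∫ _ω in {ω | M ω < τ}, τ ∂μ :=
              setIntegral_mono_on hint.integrableOn
                (integrableOn_const (measure_ne_top μ _))
                (measurableSet_lt hM measurable_const) (fun ω hω => le_of_lt hω)
          _ = τ * (μ {ω | M ω < τ}).toReal := by rw [hconst, mul_comm]
      have hA7 : (μ {ω | M ω < τ}).toReal ≤ b :=
        ENNReal.toReal_mono (measure_ne_top μ _)
          (measure_mono (fun ω h => lt_of_le_of_lt (hYM ω) (lt_of_lt_of_le h hταx)))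
      -- combine
      have hchain : (α*x) * a ≤ 3 * (τ * b) := by
        have h1 : (α*x) * a ≤ ∫ ω in {ω | τ ≤ M ω}, M ω ∂μ := by
          calc (α*x) * a ≤ (α*x) * (μ {ω | α*x ≤ M ω}).toReal :=
                mul_le_mul_of_nonneg_left hA1 hαx.le
            _ ≤ ∫ ω in {ω | α*x ≤ M ω}, M ω ∂μ := hA2
            _ ≤ _ := hA3
        have h2 : ∫ ω in {ω | τ ≤ M ω}, M ω ∂μ = 3 * ∫ ω in {ω | M ω < τ}, M ω ∂μ := by
          rw [hthr', hlowval]; ring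
        have h3 : ∫ ω in {ω | M ω < τ}, M ω ∂μ ≤ τ * b :=
          le_trans hlow (mul_le_mul_of_nonneg_left hA7 hτ)
        calc (α*x) * a ≤ ∫ ω in {ω | τ ≤ M ω}, M ω ∂μ := h1
          _ = 3 * ∫ ω in {ω | M ω < τ}, M ω ∂μ := h2
          _ ≤ 3 * (τ * b) := by linarith
      -- conclude a * x ≤ 3α² * (b * x)
      have hfin : a ≤ 3*α^2 * b := by
        have h4 : τ * b ≤ x * α^3 * b := mul_le_mul_of_nonneg_right hτα3.le hb0
        have h5 : (α*x) * a ≤ (α*x) * (3*α^2*b) := by nlinarith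
        exact le_of_mul_le_mul_left h5 hαx
      nlinarith [mul_le_mul_of_nonneg_right hfin hxpos.le]
    · have h0 : (fun y => Φ (x,y)) = fun _ => 0 := funext fun y => if_neg (fun h => hx h.1)
      rw [h0, integral_zero]
      exact mul_nonneg (by positivity) (integral_nonneg (fun y => hΨnn (x, y)))
  -- assemble
  calc ∫ ω, (if θ < Xi ω ∧ α * Xi ω ≤ Y ω ∧ Y ω ≤ Xi ω then Xi ω else 0) ∂μ
      = ∫ x, ∫ y, Φ (x, y) ∂(μ.map Y) ∂(μ.map Xi) := hiΦ
    _ ≤ ∫ x, 3*α^2 * ∫ y, Ψ (x, y) ∂(μ.map Y) ∂(μ.map Xi) := by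
        refine integral_mono hΦprod.integral_prod_left
          (hΨprod.integral_prod_left.const_mul _) key
    _ = 3*α^2 * ∫ x, ∫ y, Ψ (x, y) ∂(μ.map Y) ∂(μ.map Xi) := integral_const_mul _ _
    _ = 3*α^2 * ∫ ω, (if θ < Xi ω ∧ Y ω < α * Xi ω then Xi ω else 0) ∂μ := by rw [hiΨ]

theorem stmt15aux {Ω : Type*} [MeasurableSpace Ω] (μ : Measure Ω) [IsProbabilityMeasure μ]
    (α : ℝ) (hα : α ∈ Set.Ioc (0 : ℝ) 1)
    {n : ℕ} (X : Fin n → Ω → ℝ)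
    (hmeas : ∀ i, Measurable (X i))
    (hindep : iIndepFun X μ)
    (hnonneg : ∀ i ω, 0 ≤ X i ω)
    (hatomless : ∀ i (x : ℝ), μ {ω | X i ω = x} = 0)
    (hint : Integrable (instMax X) μ)
    (τ : ℝ) (hτ : 0 ≤ τ)
    (hthr : (∫ ω in {ω | τ ≤ instMax X ω}, instMax X ω ∂μ)
      = (3 / 4) * ∫ ω, instMax X ω ∂μ)
    (keyPair' : ∀ (M Xi Y : Ω → ℝ), Measurable M → Measurable Xi → Measurable Y →
      Integrable M μ → (∀ ω, 0 ≤ M ω) → (∀ ω, 0 ≤ Xi ω) →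
      (∀ ω, Xi ω ≤ M ω) → (∀ ω, Y ω ≤ M ω) → IndepFun Xi Y μ →
      (∫ ω in {ω | τ ≤ M ω}, M ω ∂μ = 3/4 * ∫ ω, M ω ∂μ) →
      ∫ ω, (if τ/α^3 < Xi ω ∧ α * Xi ω ≤ Y ω ∧ Y ω ≤ Xi ω then Xi ω else 0) ∂μ
        ≤ 3*α^2 * ∫ ω, (if τ/α^3 < Xi ω ∧ Y ω < α * Xi ω then Xi ω else 0) ∂μ) :
    (∫ ω in {ω | τ / α ^ 3 < instMax X ω},
        pick (fun i => X i ω) (max τ (α * instMax X ω)) ∂μ)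
      ≥ ((1 - 3 * α ^ 2 / (1 + 3 * α ^ 2)) + α * (3 * α ^ 2 / (1 + 3 * α ^ 2))) *
        ∫ ω in {ω | τ / α ^ 3 < instMax X ω}, instMax X ω ∂μ := by
  classical
  obtain ⟨hα0, hα1⟩ := hα
  set M : Ω → ℝ := instMax X with hMdef
  have hMω : ∀ ω, M ω = ⨆ i, X i ω := fun ω => rfl
  have hMnn : ∀ ω, 0 ≤ M ω := fun ω => Real.iSup_nonneg fun i => hnonneg i ω
  have hXleM : ∀ i ω, X i ω ≤ M ω := fun i ω =>
    le_ciSup (f := fun i => X i ω) (Set.Finite.bddAbove (Set.finite_range _)) i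
  have hMmeas : Measurable M := measurable_ciSup_fin hmeas
  set θ : ℝ := τ / α ^ 3 with hθdef
  have hθnn : 0 ≤ θ := div_nonneg hτ (by positivity)
  have hcube : α ^ 3 ≤ α := by nlinarith [sq_nonneg α, sq_nonneg (1 - α)]
  set B : Set Ω := {ω | θ < M ω} with hBdef
  have hBmeas : MeasurableSet B := measurableSet_lt measurable_const hMmeas
  -- the "second competitor" event
  set E2 : Set Ω := {ω | ∃ j k : Fin n, j ≠ k ∧ α * M ω ≤ X j ω ∧ α * M ω ≤ X k ω} with hE2def
  have hE2meas : MeasurableSet E2 := by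
    have he : E2 = ⋃ (j : Fin n), ⋃ (k : Fin n),
        {ω | j ≠ k ∧ α * M ω ≤ X j ω ∧ α * M ω ≤ X k ω} := by
      ext ω; simp [hE2def, Set.mem_iUnion]
    rw [he]
    refine MeasurableSet.iUnion fun j => MeasurableSet.iUnion fun k => ?_
    by_cases hjk : j = k
    · convert MeasurableSet.empty (α := Ω)
      ext ω; simp [hjk]
    · have : {ω | j ≠ k ∧ α * M ω ≤ X j ω ∧ α * M ω ≤ X k ω}
          = {ω | α * M ω ≤ X j ω} ∩ {ω | α * M ω ≤ X k ω} := by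
        ext ω; simp [hjk]
      rw [this]
      exact (measurableSet_le (hMmeas.const_mul α) (hmeas j)).inter
        (measurableSet_le (hMmeas.const_mul α) (hmeas k))
  -- the rest-maximum Y i
  set Y : Fin n → Ω → ℝ :=
    fun i ω => ⨆ j : {x // x ∈ ({i}ᶜ : Finset (Fin n))}, X j.1 ω with hYdef
  have hYmeas : ∀ i, Measurable (Y i) := fun i => measurable_ciSup_fin (fun j => hmeas j.1)
  have hXleY : ∀ i j, j ≠ i → ∀ ω, X j ω ≤ Y i ω := by
    intro i j hne ω
    exact le_ciSup (f := fun j : {x // x ∈ ({i}ᶜ : Finset (Fin n))} => X j.1 ω)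
      (Set.Finite.bddAbove (Set.finite_range _)) ⟨j, by simp [hne]⟩
  have hYleM : ∀ i ω, Y i ω ≤ M ω := fun i ω => Real.iSup_le (fun j => hXleM j.1 ω) (hMnn ω)
  have hYindep : ∀ i, IndepFun (X i) (Y i) μ := by
    intro i
    have h := hindep.indepFun_finset {i} ({i}ᶜ) disjoint_compl_right hmeas
    have h2 := h.comp (_mγ := inferInstance) (_mγ' := inferInstance)
      (φ := fun v : ({x // x ∈ ({i} : Finset (Fin n))} → ℝ) => v ⟨i, Finset.mem_singleton_self i⟩)
      (ψ := fun v : ({x // x ∈ ({i}ᶜ : Finset (Fin n))} → ℝ) => ⨆ j, v j)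
      (measurable_pi_apply _)
      (measurable_ciSup_fin (fun j => measurable_pi_apply j))
    exact h2
  -- dominated integrability helper
  have hdom : ∀ (f : Ω → ℝ), Measurable f → (∀ ω, 0 ≤ f ω) → (∀ ω, f ω ≤ M ω) →
      Integrable f μ := by
    intro f hfm h0 h1
    refine hint.mono hfm.aestronglyMeasurable (ae_of_all μ fun ω => ?_)
    rw [Real.norm_eq_abs, Real.norm_eq_abs, abs_of_nonneg (h0 ω), abs_of_nonneg (hMnn ω)]
    exact h1 ω
  -- key inequality for each i
  have hΦnn : ∀ i ω,
      0 ≤ (if θ < X i ω ∧ α * X i ω ≤ Y i ω ∧ Y i ω ≤ X i ω then X i ω else 0) := by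
    intro i ω; split_ifs with h
    · exact hnonneg i ω
    · exact le_rfl
  have hΨnn : ∀ i ω, 0 ≤ (if θ < X i ω ∧ Y i ω < α * X i ω then X i ω else 0) := by
    intro i ω; split_ifs with h
    · exact hnonneg i ω
    · exact le_rfl
  have hΦmeas : ∀ i, Measurable
      (fun ω => if θ < X i ω ∧ α * X i ω ≤ Y i ω ∧ Y i ω ≤ X i ω then X i ω else 0) := by
    intro i
    refine Measurable.ite ?_ (hmeas i) measurable_const
    exact (measurableSet_lt measurable_const (hmeas i)).inter
      ((measurableSet_le ((hmeas i).const_mul α) (hYmeas i)).inter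
        (measurableSet_le (hYmeas i) (hmeas i)))
  have hΨmeas : ∀ i, Measurable
      (fun ω => if θ < X i ω ∧ Y i ω < α * X i ω then X i ω else 0) := by
    intro i
    refine Measurable.ite ?_ (hmeas i) measurable_const
    exact (measurableSet_lt measurable_const (hmeas i)).inter
      (measurableSet_lt (hYmeas i) ((hmeas i).const_mul α))
  have hΦint : ∀ i, Integrable
      (fun ω => if θ < X i ω ∧ α * X i ω ≤ Y i ω ∧ Y i ω ≤ X i ω then X i ω else 0) μ := by
    intro i
    refine hdom _ (hΦmeas i) (hΦnn i) (fun ω => ?_)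
    split_ifs with h
    · exact hXleM i ω
    · exact hMnn ω
  have hΨint : ∀ i, Integrable
      (fun ω => if θ < X i ω ∧ Y i ω < α * X i ω then X i ω else 0) μ := by
    intro i
    refine hdom _ (hΨmeas i) (hΨnn i) (fun ω => ?_)
    split_ifs with h
    · exact hXleM i ω
    · exact hMnn ω
  have hkey : ∀ i,
      ∫ ω, (if θ < X i ω ∧ α * X i ω ≤ Y i ω ∧ Y i ω ≤ X i ω then X i ω else 0) ∂μ
        ≤ 3*α^2 * ∫ ω, (if θ < X i ω ∧ Y i ω < α * X i ω then X i ω else 0) ∂μ := by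
    intro i
    exact keyPair' M (X i) (Y i) hMmeas (hmeas i) (hYmeas i) hint hMnn (hnonneg i)
      (hXleM i) (hYleM i) (hYindep i) hthr
  -- claim 1
  have claim1 : ∫ ω in B ∩ E2, M ω ∂μ
      ≤ ∑ i, ∫ ω, (if θ < X i ω ∧ α * X i ω ≤ Y i ω ∧ Y i ω ≤ X i ω then X i ω else 0) ∂μ := by
    rw [← integral_indicator (hBmeas.inter hE2meas), ← integral_finset_sum _ (fun i _ => hΦint i)]
    refine integral_mono (hint.indicator (hBmeas.inter hE2meas))
      (integrable_finset_sum _ (fun i _ => hΦint i)) (fun ω => ?_)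
    by_cases hω : ω ∈ B ∩ E2
    · rw [Set.indicator_of_mem hω]
      obtain ⟨hB', hE2'⟩ := hω
      obtain ⟨j, k, hjk, hj, hk⟩ := hE2'
      haveI : Nonempty (Fin n) := ⟨j⟩
      obtain ⟨a, ha⟩ := Finite.exists_max (fun i => X i ω)
      have hMa : M ω = X a ω := le_antisymm (Real.iSup_le ha (hnonneg a ω)) (hXleM a ω)
      have hwit : ∃ w, w ≠ a ∧ α * M ω ≤ X w ω := by
        rcases eq_or_ne j a with rfl | hja
        · exact ⟨k, Ne.symm hjk, hk⟩
        · exact ⟨j, hja, hj⟩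
      obtain ⟨w, hwa, hw⟩ := hwit
      have hθa : θ < X a ω := by rw [← hMa]; exact hB'
      have hcond : θ < X a ω ∧ α * X a ω ≤ Y a ω ∧ Y a ω ≤ X a ω := by
        refine ⟨hθa, ?_, Real.iSup_le (fun j' => ha j'.1) (hnonneg a ω)⟩
        calc α * X a ω = α * M ω := by rw [hMa]
          _ ≤ X w ω := hw
          _ ≤ Y a ω := hXleY a w hwa ω
      have hΦa : (if θ < X a ω ∧ α * X a ω ≤ Y a ω ∧ Y a ω ≤ X a ω then X a ω else 0)
          = M ω := by rw [if_pos hcond, hMa]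
      calc M ω = _ := hΦa.symm
        _ ≤ ∑ i, (if θ < X i ω ∧ α * X i ω ≤ Y i ω ∧ Y i ω ≤ X i ω then X i ω else 0) :=
          Finset.single_le_sum (fun i _ => hΦnn i ω) (Finset.mem_univ a)
    · rw [Set.indicator_of_notMem hω]
      exact Finset.sum_nonneg fun i _ => hΦnn i ω
  -- claim 2
  have claim2 : ∑ i, ∫ ω, (if θ < X i ω ∧ Y i ω < α * X i ω then X i ω else 0) ∂μ
      ≤ ∫ ω in B \ E2, M ω ∂μ := by
    rw [← integral_indicator (hBmeas.diff hE2meas), ← integral_finset_sum _ (fun i _ => hΨint i)]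
    refine integral_mono (integrable_finset_sum _ (fun i _ => hΨint i))
      (hint.indicator (hBmeas.diff hE2meas)) (fun ω => ?_)
    by_cases hex : ∃ i, θ < X i ω ∧ Y i ω < α * X i ω
    · obtain ⟨i, hi1, hi2⟩ := hex
      have hXipos : 0 < X i ω := lt_of_le_of_lt hθnn hi1
      have hαXi : α * X i ω ≤ X i ω := mul_le_of_le_one_left (le_of_lt hXipos) hα1
      have hother : ∀ j, j ≠ i → X j ω < α * X i ω := fun j hj =>
        lt_of_le_of_lt (hXleY i j hj ω) hi2
      have hMeq : M ω = X i ω := by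
        refine le_antisymm (Real.iSup_le (fun j => ?_) (hnonneg i ω)) (hXleM i ω)
        rcases eq_or_ne j i with rfl | hji
        · exact le_rfl
        · exact le_trans (le_of_lt (hother j hji)) hαXi
      have hsum : (∑ i', (if θ < X i' ω ∧ Y i' ω < α * X i' ω then X i' ω else 0)) = X i ω := by
        rw [Finset.sum_eq_single i]
        · exact if_pos ⟨hi1, hi2⟩
        · intro i' _ hne
          apply if_neg
          rintro ⟨h1', h2'⟩
          have hXi'pos : 0 < X i' ω := lt_of_le_of_lt hθnn h1'
          have h5 : X i' ω < α * X i ω := hother i' hne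
          have h6 : X i ω < α * X i' ω :=
            lt_of_le_of_lt (hXleY i' i (Ne.symm hne) ω) h2'
          have h7 : α * X i' ω ≤ X i' ω := mul_le_of_le_one_left (le_of_lt hXi'pos) hα1
          linarith
        · intro h; exact absurd (Finset.mem_univ i) h
      have hmem : ω ∈ B \ E2 := by
        constructor
        · show θ < M ω
          rw [hMeq]; exact hi1
        · rintro ⟨j, k, hjk, hj, hk⟩
          have hwit : ∃ w, w ≠ i ∧ α * M ω ≤ X w ω := by
            rcases eq_or_ne j i with rfl | hji
            · exact ⟨k, Ne.symm hjk, hk⟩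
            · exact ⟨j, hji, hj⟩
          obtain ⟨w, hwi, hw⟩ := hwit
          rw [hMeq] at hw
          exact absurd hw (not_le.mpr (hother w hwi))
      rw [hsum, Set.indicator_of_mem hmem, hMeq]
    · push_neg at hex
      have hzero : (∑ i', (if θ < X i' ω ∧ Y i' ω < α * X i' ω then X i' ω else 0)) = 0 :=
        Finset.sum_eq_zero fun i' _ => if_neg (by
          rintro ⟨h1, h2⟩; exact absurd h2 (not_lt.mpr (hex i' h1)))
      rw [hzero]
      exact Set.indicator_nonneg (fun ω' _ => hMnn ω') ω
  -- core inequality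
  have hcore : ∫ ω in B ∩ E2, M ω ∂μ ≤ 3*α^2 * ∫ ω in B \ E2, M ω ∂μ := by
    calc ∫ ω in B ∩ E2, M ω ∂μ
        ≤ ∑ i, ∫ ω, (if θ < X i ω ∧ α * X i ω ≤ Y i ω ∧ Y i ω ≤ X i ω then X i ω else 0) ∂μ :=
          claim1
      _ ≤ ∑ i, 3*α^2 * ∫ ω, (if θ < X i ω ∧ Y i ω < α * X i ω then X i ω else 0) ∂μ :=
          Finset.sum_le_sum fun i _ => hkey i
      _ = 3*α^2 * ∑ i, ∫ ω, (if θ < X i ω ∧ Y i ω < α * X i ω then X i ω else 0) ∂μ := by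
          rw [Finset.mul_sum]
      _ ≤ 3*α^2 * ∫ ω in B \ E2, M ω ∂μ :=
          mul_le_mul_of_nonneg_left claim2 (by positivity)
  -- pick function facts
  have hpicknn : ∀ ω, 0 ≤ pick (fun i => X i ω) (max τ (α * M ω)) := by
    intro ω
    rw [pick]
    split_ifs with h
    · have hm := Finset.min'_mem _ h
      have := (Finset.mem_filter.mp hm).2
      exact le_trans (le_trans hτ (le_max_left _ _)) this
    · exact le_rfl
  have hpickleM : ∀ ω, pick (fun i => X i ω) (max τ (α * M ω)) ≤ M ω := by
    intro ω
    rw [pick]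
    split_ifs with h
    · exact hXleM _ ω
    · exact hMnn ω
  have hpickmeas : Measurable (fun ω => pick (fun i => X i ω) (max τ (α * M ω))) := by
    have he : (fun ω => pick (fun i => X i ω) (max τ (α * M ω)))
        = fun ω => ∑ i, if (max τ (α * M ω) ≤ X i ω ∧
            ∀ j, j < i → ¬ max τ (α * M ω) ≤ X j ω) then X i ω else 0 :=
      funext fun ω => pick_eq_sum _ _
    rw [he]
    apply Finset.measurable_sum
    intro i _
    have htm : Measurable (fun ω => max τ (α * M ω)) :=
      measurable_const.max (hMmeas.const_mul α)
    refine Measurable.ite ?_ (hmeas i) measurable_const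
    rw [Set.setOf_and]
    refine (measurableSet_le htm (hmeas i)).inter ?_
    rw [Set.setOf_forall]
    refine MeasurableSet.iInter fun j => ?_
    by_cases hj : j < i
    · simp only [hj, true_implies]
      exact (measurableSet_le htm (hmeas j)).compl
    · simp only [hj, false_implies, Set.setOf_true]
      exact MeasurableSet.univ
  have hpickint : Integrable (fun ω => pick (fun i => X i ω) (max τ (α * M ω))) μ :=
    hdom _ hpickmeas hpicknn hpickleM
  -- pointwise lower bound on B
  have hpb : ∀ ω ∈ B, (if ω ∈ E2 then α * M ω else M ω)
      ≤ pick (fun i => X i ω) (max τ (α * M ω)) := by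
    intro ω hω
    have hθM : θ < M ω := hω
    have hταM : τ ≤ α * M ω := by
      have h3 : τ < M ω * α ^ 3 := (div_lt_iff₀ (by positivity)).mp hθM
      nlinarith [mul_le_mul_of_nonneg_left hcube (hMnn ω)]
    have hmax : max τ (α * M ω) = α * M ω := max_eq_right hταM
    haveI hne : Nonempty (Fin n) := by
      rcases isEmpty_or_nonempty (Fin n) with he | h
      · exfalso
        have h0 : M ω = 0 := Real.iSup_of_isEmpty _
        rw [h0] at hθM
        linarith
      · exact h
    obtain ⟨a, ha⟩ := Finite.exists_max (fun i => X i ω)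
    have hMa : M ω = X a ω := le_antisymm (Real.iSup_le ha (hnonneg a ω)) (hXleM a ω)
    have hαM : α * M ω ≤ M ω := mul_le_of_le_one_left (hMnn ω) hα1
    have haF : a ∈ Finset.univ.filter
        (fun i => max τ (α * M ω) ≤ (fun i => X i ω) i) := by
      refine Finset.mem_filter.mpr ⟨Finset.mem_univ a, ?_⟩
      show max τ (α * M ω) ≤ X a ω
      rw [hmax, ← hMa]; exact hαM
    have hFne : (Finset.univ.filter
        (fun i => max τ (α * M ω) ≤ (fun i => X i ω) i)).Nonempty := ⟨a, haF⟩
    have hpeq := pick_of_nonempty (fun i => X i ω) (max τ (α * M ω)) hFne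
    set i₀ := (Finset.univ.filter
      (fun i => max τ (α * M ω) ≤ (fun i => X i ω) i)).min' hFne with hi₀def
    have hi₀mem := Finset.min'_mem _ hFne
    have hi₀ : α * M ω ≤ X i₀ ω := by
      have h := (Finset.mem_filter.mp hi₀mem).2
      exact le_trans (le_max_right _ _) h
    by_cases hE2 : ω ∈ E2
    · rw [if_pos hE2, hpeq]
      exact hi₀
    · rw [if_neg hE2, hpeq]
      have hia : i₀ = a := by
        by_contra hne'
        exact hE2 ⟨i₀, a, hne', hi₀, by rw [hMa] at hαM; rw [← hMa] at hαM ⊢; exact hαM⟩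
      show M ω ≤ X i₀ ω
      rw [hia, ← hMa]
  -- integral splitting over B
  have hdisj : Disjoint (B ∩ E2) (B \ E2) :=
    Set.disjoint_left.mpr fun ω hx hx' => hx'.2 hx.2
  have hunion : (B ∩ E2) ∪ (B \ E2) = B := Set.inter_union_diff B E2
  have hsplitB : ∫ ω in B, M ω ∂μ
      = (∫ ω in B ∩ E2, M ω ∂μ) + ∫ ω in B \ E2, M ω ∂μ := by
    rw [← setIntegral_union hdisj (hBmeas.diff hE2meas) hint.integrableOn hint.integrableOn,
      hunion]
  -- lower bound for the algorithm
  have hhf : Integrable (fun ω => if ω ∈ E2 then α * M ω else M ω) μ := by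
    refine hdom _ (Measurable.ite hE2meas (hMmeas.const_mul α) hMmeas) (fun ω => ?_) (fun ω => ?_)
    · split_ifs with h
      · exact mul_nonneg hα0.le (hMnn ω)
      · exact hMnn ω
    · split_ifs with h
      · exact mul_le_of_le_one_left (hMnn ω) hα1
      · exact le_rfl
  have hstep1 : ∫ ω in B, (if ω ∈ E2 then α * M ω else M ω) ∂μ
      ≤ ∫ ω in B, pick (fun i => X i ω) (max τ (α * M ω)) ∂μ :=
    setIntegral_mono_on hhf.integrableOn hpickint.integrableOn hBmeas hpb
  have hstep2 : ∫ ω in B, (if ω ∈ E2 then α * M ω else M ω) ∂μ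
      = α * (∫ ω in B ∩ E2, M ω ∂μ) + ∫ ω in B \ E2, M ω ∂μ := by
    have h1 : ∫ ω in B ∩ E2, (if ω ∈ E2 then α * M ω else M ω) ∂μ
        = α * ∫ ω in B ∩ E2, M ω ∂μ := by
      rw [← integral_const_mul α (fun ω => M ω)]
      exact setIntegral_congr_fun (hBmeas.inter hE2meas) (fun ω hω => if_pos hω.2)
    have h2 : ∫ ω in B \ E2, (if ω ∈ E2 then α * M ω else M ω) ∂μ
        = ∫ ω in B \ E2, M ω ∂μ :=
      setIntegral_congr_fun (hBmeas.diff hE2meas) (fun ω hω => if_neg hω.2)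
    calc ∫ ω in B, (if ω ∈ E2 then α * M ω else M ω) ∂μ
        = (∫ ω in B ∩ E2, (if ω ∈ E2 then α * M ω else M ω) ∂μ)
          + ∫ ω in B \ E2, (if ω ∈ E2 then α * M ω else M ω) ∂μ := by
          conv_lhs => rw [← hunion]
          exact setIntegral_union hdisj (hBmeas.diff hE2meas)
            hhf.integrableOn hhf.integrableOn
      _ = α * (∫ ω in B ∩ E2, M ω ∂μ) + ∫ ω in B \ E2, M ω ∂μ := by rw [h1, h2]
  -- final arithmetic
  set L := ∫ ω in B ∩ E2, M ω ∂μ with hLdef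
  set R := ∫ ω in B \ E2, M ω ∂μ with hRdef
  have hP : α * L + R ≤ ∫ ω in B, pick (fun i => X i ω) (max τ (α * M ω)) ∂μ := by
    rw [← hstep2] at *
    linarith [hstep1]
  have hden : (0:ℝ) < 1 + 3*α^2 := by positivity
  have hcoef : ((1 - 3 * α ^ 2 / (1 + 3 * α ^ 2)) + α * (3 * α ^ 2 / (1 + 3 * α ^ 2)))
      = (1 + 3*α^3)/(1 + 3*α^2) := by
    field_simp
    ring
  rw [ge_iff_le, hsplitB, hcoef, div_mul_eq_mul_div, div_le_iff₀ hden]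
  nlinarith [mul_le_mul_of_nonneg_right hP hden.le,
    mul_nonneg (sub_nonneg.mpr hα1) (sub_nonneg.mpr hcore)]

/-- Prediction-regime bound: on the event `B = {M > τ̄/α³}`, with
`g(x) = 3x²/(1 + 3x²)`, the prediction-augmented algorithm satisfies
`E[pick(X, max(τ̄, α·M))·1_B] ≥ ((1 − g(α)) + α·g(α))·E[M·1_B]`. -/
theorem stmt15 {Ω : Type*} [MeasurableSpace Ω] (μ : Measure Ω) [IsProbabilityMeasure μ]
    (α : ℝ) (hα : α ∈ Set.Ioc (0 : ℝ) 1)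
    {n : ℕ} (X : Fin n → Ω → ℝ)
    (hmeas : ∀ i, Measurable (X i))
    (hindep : iIndepFun X μ)
    (hnonneg : ∀ i ω, 0 ≤ X i ω)
    (hatomless : ∀ i (x : ℝ), μ {ω | X i ω = x} = 0)
    (hint : Integrable (instMax X) μ)
    (τ : ℝ) (hτ : 0 ≤ τ)
    (hthr : (∫ ω in {ω | τ ≤ instMax X ω}, instMax X ω ∂μ) = (3 / 4) * OPT μ X) :
    (∫ ω in {ω | τ / α ^ 3 < instMax X ω},
        pick (fun i => X i ω) (max τ (α * instMax X ω)) ∂μ)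
      ≥ ((1 - 3 * α ^ 2 / (1 + 3 * α ^ 2)) + α * (3 * α ^ 2 / (1 + 3 * α ^ 2))) *
        ∫ ω in {ω | τ / α ^ 3 < instMax X ω}, instMax X ω ∂μ := by
  refine stmt15aux μ α hα X hmeas hindep hnonneg hatomless hint τ hτ hthr ?_
  intro M' Xi Y hM hXi hY hintM hMnn hXinn hXiM hYM hind hthr'
  exact keyPair μ M' Xi Y hM hXi hY hintM hMnn hXinn hXiM hYM hind τ α hτ hα.1 hα.2 hthr'
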